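/- arXiv:2603.23060 — 5 statements merged into one kernel-verified Lean document; each statement's English description precedes it below -/
import Mathlib

section
/- Let q, r: ℝ³ → ℂ be smooth functions of (x, y, t) satisfying at every point the second and third AKNS flows: r_y = r_{xx} − 2qr², q_y = −q_{xx} + 2q²r, r_t = r_{xxx} − 6qr·r_x, and q_t = q_{xxx} − 6qr·q_x. Then u := −qr and w := q_x r − q r_x satisfy w_x = u_y and the Kadomtsev–Petviashvili equation u_t = (1/4)u_{xxx} + 3u·u_x + (3/4)w_y. -/
noncomputable section

/-- Partial derivative in the first coordinate `x` of `ℝ³ = (x, y, t)`. -/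
def pdx (f : ℝ × ℝ × ℝ → ℂ) (p : ℝ × ℝ × ℝ) : ℂ :=
  deriv (fun s => f (s, p.2.1, p.2.2)) p.1

/-- Partial derivative in the second coordinate `y`. -/
def pdy (f : ℝ × ℝ × ℝ → ℂ) (p : ℝ × ℝ × ℝ) : ℂ :=
  deriv (fun s => f (p.1, s, p.2.2)) p.2.1

/-- Partial derivative in the third coordinate `t`. -/
def pdt (f : ℝ × ℝ × ℝ → ℂ) (p : ℝ × ℝ × ℝ) : ℂ :=
  deriv (fun s => f (p.1, p.2.1, s)) p.2.2

namespace AKNSaux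

abbrev E3 := ℝ × ℝ × ℝ

def D (v : E3) (f : E3 → ℂ) : E3 → ℂ := fun p => fderiv ℝ f p v

lemma D_smooth {f : E3 → ℂ} (hf : ContDiff ℝ (⊤ : ℕ∞) f) (v : E3) : ContDiff ℝ (⊤ : ℕ∞) (D v f) :=
  (ContinuousLinearMap.apply ℝ ℂ v).contDiff.comp (hf.fderiv_right (le_refl _))

lemma pdx_eq {f : E3 → ℂ} (hf : ContDiff ℝ (⊤ : ℕ∞) f) : pdx f = D (1,0,0) f := by
  funext p
  have h : HasDerivAt (fun s : ℝ => ((s, p.2.1, p.2.2) : E3)) ((1:ℝ), (0:ℝ), (0:ℝ)) p.1 :=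
    HasDerivAt.prodMk (hasDerivAt_id p.1) (HasDerivAt.prodMk (hasDerivAt_const _ _) (hasDerivAt_const _ _))
  exact ((hf.differentiable (by simp) p).hasFDerivAt.comp_hasDerivAt p.1 h).deriv

lemma pdy_eq {f : E3 → ℂ} (hf : ContDiff ℝ (⊤ : ℕ∞) f) : pdy f = D (0,1,0) f := by
  funext p
  have h : HasDerivAt (fun s : ℝ => ((p.1, s, p.2.2) : E3)) ((0:ℝ), (1:ℝ), (0:ℝ)) p.2.1 :=
    HasDerivAt.prodMk (hasDerivAt_const _ _) (HasDerivAt.prodMk (hasDerivAt_id _) (hasDerivAt_const _ _))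
  exact ((hf.differentiable (by simp) p).hasFDerivAt.comp_hasDerivAt p.2.1 h).deriv

lemma pdt_eq {f : E3 → ℂ} (hf : ContDiff ℝ (⊤ : ℕ∞) f) : pdt f = D (0,0,1) f := by
  funext p
  have h : HasDerivAt (fun s : ℝ => ((p.1, p.2.1, s) : E3)) ((0:ℝ), (0:ℝ), (1:ℝ)) p.2.2 :=
    HasDerivAt.prodMk (hasDerivAt_const _ _) (HasDerivAt.prodMk (hasDerivAt_const _ _) (hasDerivAt_id _))
  exact ((hf.differentiable (by simp) p).hasFDerivAt.comp_hasDerivAt p.2.2 h).deriv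

lemma D_mul {f g : E3 → ℂ} (hf : ContDiff ℝ (⊤ : ℕ∞) f) (hg : ContDiff ℝ (⊤ : ℕ∞) g) (v : E3) :
    D v (fun y => f y * g y) = fun p => D v f p * g p + f p * D v g p := by
  funext p
  simp only [D]
  rw [fderiv_fun_mul (hf.differentiable (by simp) p) (hg.differentiable (by simp) p)]
  simp only [ContinuousLinearMap.add_apply, ContinuousLinearMap.smul_apply, smul_eq_mul]
  ring

lemma D_neg (f : E3 → ℂ) (v : E3) :
    D v (fun y => -(f y)) = fun p => -(D v f p) := by
  funext p
  simp only [D, fderiv_fun_neg, ContinuousLinearMap.neg_apply]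

lemma D_add {f g : E3 → ℂ} (hf : ContDiff ℝ (⊤ : ℕ∞) f) (hg : ContDiff ℝ (⊤ : ℕ∞) g) (v : E3) :
    D v (fun y => f y + g y) = fun p => D v f p + D v g p := by
  funext p
  simp only [D]
  rw [fderiv_fun_add (hf.differentiable (by simp) p) (hg.differentiable (by simp) p)]
  simp

lemma D_sub {f g : E3 → ℂ} (hf : ContDiff ℝ (⊤ : ℕ∞) f) (hg : ContDiff ℝ (⊤ : ℕ∞) g) (v : E3) :
    D v (fun y => f y - g y) = fun p => D v f p - D v g p := by
  funext p
  simp only [D]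
  rw [fderiv_fun_sub (hf.differentiable (by simp) p) (hg.differentiable (by simp) p)]
  simp

lemma D_const_mul {f : E3 → ℂ} (hf : ContDiff ℝ (⊤ : ℕ∞) f) (c : ℂ) (v : E3) :
    D v (fun y => c * f y) = fun p => c * D v f p := by
  funext p
  simp only [D]
  rw [fderiv_const_mul (hf.differentiable (by simp) p)]
  simp

lemma D_comm {f : E3 → ℂ} (hf : ContDiff ℝ (⊤ : ℕ∞) f) (v w : E3) :
    D v (D w f) = D w (D v f) := by
  have hg : ∀ x, HasFDerivAt (fderiv ℝ f) (fderiv ℝ (fderiv ℝ f) x) x := fun x =>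
    (((hf.fderiv_right (m := (⊤ : ℕ∞)) (le_refl _)).differentiable (by simp)) x).hasFDerivAt
  have hf' : ∀ y, HasFDerivAt f (fderiv ℝ f y) y := fun y =>
    (hf.differentiable (by simp) y).hasFDerivAt
  funext x
  have key : ∀ a b : E3, D a (D b f) x = fderiv ℝ (fderiv ℝ f) x a b := by
    intro a b
    have h1 : HasFDerivAt (fun p => fderiv ℝ f p b)
        ((ContinuousLinearMap.apply ℝ ℂ b).comp (fderiv ℝ (fderiv ℝ f) x)) x :=
      (ContinuousLinearMap.apply ℝ ℂ b).hasFDerivAt.comp x (hg x)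
    show (fderiv ℝ (fun p => fderiv ℝ f p b) x) a = _
    simp only [h1.fderiv, ContinuousLinearMap.coe_comp', Function.comp_apply,
      ContinuousLinearMap.apply_apply]
  rw [key v w, key w v, second_derivative_symmetric hf' (hg x) v w]

end AKNSaux

open AKNSaux

/-- **Reduction to the KP equation via the squared eigenfunction symmetry constraint.**
If `(r, q)` satisfy the second and third AKNS flows, then `u := −qr` and
`w := q_x r − q r_x` satisfy `w_x = u_y` and the KP equation
`u_t = (1/4)u_{xxx} + 3uu_x + (3/4)w_y`. -/
theorem AKNS_to_KP (q r : ℝ × ℝ × ℝ → ℂ)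
    (hq : ContDiff ℝ (⊤ : ℕ∞) q) (hr : ContDiff ℝ (⊤ : ℕ∞) r)
    (h1 : ∀ z, pdy r z = pdx (pdx r) z - 2 * q z * (r z) ^ 2)
    (h2 : ∀ z, pdy q z = -(pdx (pdx q) z) + 2 * (q z) ^ 2 * r z)
    (h3 : ∀ z, pdt r z = pdx (pdx (pdx r)) z - 6 * q z * r z * pdx r z)
    (h4 : ∀ z, pdt q z = pdx (pdx (pdx q)) z - 6 * q z * r z * pdx q z) :
    (∀ z, pdx (fun y => pdx q y * r y - q y * pdx r y) z =
      pdy (fun y => -(q y * r y)) z) ∧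
    (∀ z, pdt (fun y => -(q y * r y)) z =
      (1 / 4) * pdx (pdx (pdx (fun y => -(q y * r y)))) z
      + 3 * (-(q z * r z)) * pdx (fun y => -(q y * r y)) z
      + (3 / 4) * pdy (fun y => pdx q y * r y - q y * pdx r y) z) := by
  -- smoothness of derived functions
  have sQ1 : ContDiff ℝ (⊤ : ℕ∞) (D (1,0,0) q) := D_smooth hq (1,0,0)
  have sQ2 : ContDiff ℝ (⊤ : ℕ∞) (D (1,0,0) (D (1,0,0) q)) := D_smooth sQ1 (1,0,0)
  have sR1 : ContDiff ℝ (⊤ : ℕ∞) (D (1,0,0) r) := D_smooth hr (1,0,0)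
  have sR2 : ContDiff ℝ (⊤ : ℕ∞) (D (1,0,0) (D (1,0,0) r)) := D_smooth sR1 (1,0,0)
  have su : ContDiff ℝ (⊤ : ℕ∞) (fun y => -(q y * r y)) := (hq.mul hr).neg
  have su1 : ContDiff ℝ (⊤ : ℕ∞) (D (1,0,0) (fun y => -(q y * r y))) := D_smooth su (1,0,0)
  have su2 : ContDiff ℝ (⊤ : ℕ∞) (D (1,0,0) (D (1,0,0) (fun y => -(q y * r y)))) := D_smooth su1 (1,0,0)
  have sw : ContDiff ℝ (⊤ : ℕ∞) (fun y => D (1,0,0) q y * r y - q y * D (1,0,0) r y) :=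
    (sQ1.mul hr).sub (hq.mul sR1)
  -- pd→D conversion for q, r
  have px_q : pdx q = D (1,0,0) q := pdx_eq hq
  have px_r : pdx r = D (1,0,0) r := pdx_eq hr
  have pxx_q : pdx (pdx q) = D (1,0,0) (D (1,0,0) q) := by rw [px_q]; exact pdx_eq sQ1
  have pxx_r : pdx (pdx r) = D (1,0,0) (D (1,0,0) r) := by rw [px_r]; exact pdx_eq sR1
  have pxxx_q : pdx (pdx (pdx q)) = D (1,0,0) (D (1,0,0) (D (1,0,0) q)) := by
    rw [pxx_q]; exact pdx_eq sQ2
  have pxxx_r : pdx (pdx (pdx r)) = D (1,0,0) (D (1,0,0) (D (1,0,0) r)) := by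
    rw [pxx_r]; exact pdx_eq sR2
  -- flow equations in D form
  have h1' : D (0,1,0) r = fun z => D (1,0,0) (D (1,0,0) r) z - 2 * q z * (r z * r z) := by
    funext z
    rw [← pdy_eq hr, h1 z, pxx_r]; ring
  have h2' : D (0,1,0) q = fun z => -(D (1,0,0) (D (1,0,0) q) z) + 2 * (q z * q z) * r z := by
    funext z
    rw [← pdy_eq hq, h2 z, pxx_q]; ring
  have h3' : D (0,0,1) r = fun z =>
      D (1,0,0) (D (1,0,0) (D (1,0,0) r)) z - 6 * q z * r z * D (1,0,0) r z := by
    funext z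
    rw [← pdt_eq hr, h3 z, pxxx_r, px_r]
  have h4' : D (0,0,1) q = fun z =>
      D (1,0,0) (D (1,0,0) (D (1,0,0) q)) z - 6 * q z * r z * D (1,0,0) q z := by
    funext z
    rw [← pdt_eq hq, h4 z, pxxx_q, px_q]
  have hw : (fun y => pdx q y * r y - q y * pdx r y)
      = fun y => D (1,0,0) q y * r y - q y * D (1,0,0) r y := by
    simp only [px_q, px_r]
  constructor
  · intro z
    rw [hw, pdx_eq sw, pdy_eq su]
    simp only [D_neg, D_mul hq hr, D_sub (sQ1.mul hr) (hq.mul sR1),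
      D_mul sQ1 hr, D_mul hq sR1, h1', h2']
    ring
  · intro z
    rw [hw]
    -- convert pd to D
    simp only [pdt_eq su, pdx_eq su, pdx_eq su1, pdx_eq su2, pdy_eq sw]
    -- expand all x/t/y derivatives of products (no commutation needed yet)
    simp only [D_neg, D_mul hq hr, D_sub (sQ1.mul hr) (hq.mul sR1),
      D_mul sQ1 hr, D_mul hq sR1, D_add (sQ1.mul hr) (hq.mul sR1),
      D_mul sQ2 hr, D_mul sQ1 sR1, D_mul hq sR2,
      D_add (sQ2.mul hr) (sQ1.mul sR1), D_add (sQ1.mul sR1) (hq.mul sR2),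
      D_add ((sQ2.mul hr).add (sQ1.mul sR1)) (sQ1.mul sR1),
      D_add (((sQ2.mul hr).add (sQ1.mul sR1)).add (sQ1.mul sR1)) (hq.mul sR2),
      D_add ((sQ2.mul hr).add (sQ1.mul sR1)) ((sQ1.mul sR1).add (hq.mul sR2))]
    -- commute mixed derivatives
    rw [D_comm hq (0,1,0) (1,0,0), D_comm hr (0,1,0) (1,0,0)]
    -- substitute the flows
    simp only [h1', h2', h3', h4']
    -- expand the x-derivatives of the flow right-hand sides
    simp only [D_neg,
      D_add sQ2.neg ((contDiff_const.mul (hq.mul hq)).mul hr),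
      D_mul (contDiff_const.mul (hq.mul hq)) hr, D_const_mul (hq.mul hq) 2,
      D_mul hq hq,
      D_sub sR2 ((contDiff_const.mul hq).mul (hr.mul hr)),
      D_mul (contDiff_const.mul hq) (hr.mul hr), D_const_mul hq 2,
      D_mul hr hr]
    ring


end
end

section
/- Let p, q: ℝ³ → ℂ be smooth functions of (x, y, t) satisfying at every point the second and third Chen–Lee–Liu flows: p_y = p_{xx} + 2p·p_x·q, q_y = −q_{xx} + 2p·q·q_x, p_t = p_{xxx} + 3pq·p_{xx} + 3q·p_x² + 3p²q²·p_x, and q_t = q_{xxx} − 3pq·q_{xx} − 3p·q_x² + 3p²q²·q_x. Then v := pq and w := p_x q − p q_x + v² satisfy w_x = v_y and the modified Kadomtsev–Petviashvili equation v_t = (1/4)v_{xxx} − (3/2)v²·v_x + (3/2)v_x·w + (3/4)w_y. -/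
noncomputable section

section Aux

variable {f g : ℝ × ℝ × ℝ → ℂ}

theorem hasDX_fd (hf : ContDiff ℝ (⊤ : ℕ∞) f) (z : ℝ × ℝ × ℝ) :
    HasDerivAt (fun s => f (s, z.2.1, z.2.2)) (fderiv ℝ f z ((1:ℝ), (0:ℝ), (0:ℝ))) z.1 := by
  have hL : HasDerivAt (fun s : ℝ => ((s, z.2.1, z.2.2) : ℝ × ℝ × ℝ))
      ((1:ℝ), (0:ℝ), (0:ℝ)) z.1 :=
    (hasDerivAt_id z.1).prodMk (hasDerivAt_const _ _)
  exact (hf.differentiable (by simp) z).hasFDerivAt.comp_hasDerivAt z.1 hL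

theorem hasDY_fd (hf : ContDiff ℝ (⊤ : ℕ∞) f) (z : ℝ × ℝ × ℝ) :
    HasDerivAt (fun s => f (z.1, s, z.2.2)) (fderiv ℝ f z ((0:ℝ), (1:ℝ), (0:ℝ))) z.2.1 := by
  have hL : HasDerivAt (fun s : ℝ => ((z.1, s, z.2.2) : ℝ × ℝ × ℝ))
      ((0:ℝ), (1:ℝ), (0:ℝ)) z.2.1 :=
    (hasDerivAt_const _ _).prodMk ((hasDerivAt_id z.2.1).prodMk (hasDerivAt_const _ _))
  exact (hf.differentiable (by simp) z).hasFDerivAt.comp_hasDerivAt z.2.1 hL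

theorem hasDT_fd (hf : ContDiff ℝ (⊤ : ℕ∞) f) (z : ℝ × ℝ × ℝ) :
    HasDerivAt (fun s => f (z.1, z.2.1, s)) (fderiv ℝ f z ((0:ℝ), (0:ℝ), (1:ℝ))) z.2.2 := by
  have hL : HasDerivAt (fun s : ℝ => ((z.1, z.2.1, s) : ℝ × ℝ × ℝ))
      ((0:ℝ), (0:ℝ), (1:ℝ)) z.2.2 :=
    (hasDerivAt_const _ _).prodMk ((hasDerivAt_const _ _).prodMk (hasDerivAt_id z.2.2))
  exact (hf.differentiable (by simp) z).hasFDerivAt.comp_hasDerivAt z.2.2 hL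

theorem pdx_fd (hf : ContDiff ℝ (⊤ : ℕ∞) f) (z : ℝ × ℝ × ℝ) :
    pdx f z = fderiv ℝ f z ((1:ℝ), (0:ℝ), (0:ℝ)) := (hasDX_fd hf z).deriv

theorem pdy_fd (hf : ContDiff ℝ (⊤ : ℕ∞) f) (z : ℝ × ℝ × ℝ) :
    pdy f z = fderiv ℝ f z ((0:ℝ), (1:ℝ), (0:ℝ)) := (hasDY_fd hf z).deriv

theorem pdt_fd (hf : ContDiff ℝ (⊤ : ℕ∞) f) (z : ℝ × ℝ × ℝ) :
    pdt f z = fderiv ℝ f z ((0:ℝ), (0:ℝ), (1:ℝ)) := (hasDT_fd hf z).deriv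

theorem hasDX (hf : ContDiff ℝ (⊤ : ℕ∞) f) (z : ℝ × ℝ × ℝ) :
    HasDerivAt (fun s => f (s, z.2.1, z.2.2)) (pdx f z) z.1 := by
  rw [pdx_fd hf]; exact hasDX_fd hf z

theorem hasDY (hf : ContDiff ℝ (⊤ : ℕ∞) f) (z : ℝ × ℝ × ℝ) :
    HasDerivAt (fun s => f (z.1, s, z.2.2)) (pdy f z) z.2.1 := by
  rw [pdy_fd hf]; exact hasDY_fd hf z

theorem hasDT (hf : ContDiff ℝ (⊤ : ℕ∞) f) (z : ℝ × ℝ × ℝ) :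
    HasDerivAt (fun s => f (z.1, z.2.1, s)) (pdt f z) z.2.2 := by
  rw [pdt_fd hf]; exact hasDT_fd hf z

theorem contDiff_pdx (hf : ContDiff ℝ (⊤ : ℕ∞) f) : ContDiff ℝ (⊤ : ℕ∞) (pdx f) := by
  have h : pdx f = fun z => fderiv ℝ f z ((1:ℝ), (0:ℝ), (0:ℝ)) := funext fun z => pdx_fd hf z
  rw [h]; exact (hf.fderiv_right (by simp)).clm_apply contDiff_const

theorem pdy_pdx (hf : ContDiff ℝ (⊤ : ℕ∞) f) (z : ℝ × ℝ × ℝ) :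
    pdy (pdx f) z = pdx (pdy f) z := by
  have hc : ContDiff ℝ (⊤ : ℕ∞) (fderiv ℝ f) := hf.fderiv_right (by simp)
  have hd : DifferentiableAt ℝ (fderiv ℝ f) z := (hc.differentiable (by simp)) z
  have hsymm := (hf.contDiffAt (x := z)).isSymmSndFDerivAt (by rw [minSmoothness_of_isRCLikeNormedField]; exact WithTop.coe_le_coe.mpr le_top)
  have hx : pdx f = fun w => fderiv ℝ f w ((1:ℝ), (0:ℝ), (0:ℝ)) := funext fun w => pdx_fd hf w
  have hy : pdy f = fun w => fderiv ℝ f w ((0:ℝ), (1:ℝ), (0:ℝ)) := funext fun w => pdy_fd hf w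
  have hcx : ContDiff ℝ (⊤ : ℕ∞) (pdx f) := contDiff_pdx hf
  have hcy : ContDiff ℝ (⊤ : ℕ∞) (pdy f) := by
    rw [hy]; exact (hf.fderiv_right (by simp)).clm_apply contDiff_const
  have e₁ : pdy (pdx f) z
      = fderiv ℝ (fderiv ℝ f) z ((0:ℝ), (1:ℝ), (0:ℝ)) ((1:ℝ), (0:ℝ), (0:ℝ)) := by
    rw [pdy_fd hcx z, hx, fderiv_clm_apply hd (differentiableAt_const _)]
    simp
  have e₂ : pdx (pdy f) z
      = fderiv ℝ (fderiv ℝ f) z ((1:ℝ), (0:ℝ), (0:ℝ)) ((0:ℝ), (1:ℝ), (0:ℝ)) := by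
    rw [pdx_fd hcy z, hy, fderiv_clm_apply hd (differentiableAt_const _)]
    simp
  rw [e₁, e₂]; exact hsymm _ _

theorem HasDerivAt.csq {c : ℝ → ℂ} {c' : ℂ} {x : ℝ} (h : HasDerivAt c c' x) :
    HasDerivAt (fun y => c y ^ 2) (c' * c x + c x * c') x := by
  simp only [pow_two]; exact h.mul h

end Aux

/-- **Reduction to the mKP equation via the squared eigenfunction symmetry constraint.**
If `(p, q)` satisfy the second and third Chen–Lee–Liu flows, then `v := pq` and
`w := p_x q − p q_x + v²` satisfy `w_x = v_y` and the mKP equation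
`v_t = (1/4)v_{xxx} − (3/2)v²v_x + (3/2)v_x·w + (3/4)w_y`. -/
theorem CLL_to_mKP (p q : ℝ × ℝ × ℝ → ℂ)
    (hp : ContDiff ℝ (⊤ : ℕ∞) p) (hq : ContDiff ℝ (⊤ : ℕ∞) q)
    (h1 : ∀ z, pdy p z = pdx (pdx p) z + 2 * p z * pdx p z * q z)
    (h2 : ∀ z, pdy q z = -(pdx (pdx q) z) + 2 * p z * q z * pdx q z)
    (h3 : ∀ z, pdt p z = pdx (pdx (pdx p)) z + 3 * p z * q z * pdx (pdx p) z
      + 3 * q z * (pdx p z) ^ 2 + 3 * (p z) ^ 2 * (q z) ^ 2 * pdx p z)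
    (h4 : ∀ z, pdt q z = pdx (pdx (pdx q)) z - 3 * p z * q z * pdx (pdx q) z
      - 3 * p z * (pdx q z) ^ 2 + 3 * (p z) ^ 2 * (q z) ^ 2 * pdx q z) :
    (∀ z, pdx (fun y => pdx p y * q y - p y * pdx q y + (p y * q y) ^ 2) z =
      pdy (fun y => p y * q y) z) ∧
    (∀ z, pdt (fun y => p y * q y) z =
      (1 / 4) * pdx (pdx (pdx (fun y => p y * q y))) z
      - (3 / 2) * (p z * q z) ^ 2 * pdx (fun y => p y * q y) z
      + (3 / 2) * pdx (fun y => p y * q y) z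
        * (pdx p z * q z - p z * pdx q z + (p z * q z) ^ 2)
      + (3 / 4) * pdy (fun y => pdx p y * q y - p y * pdx q y + (p y * q y) ^ 2) z) := by
  have hp1 : ContDiff ℝ (⊤ : ℕ∞) (pdx p) := contDiff_pdx hp
  have hp2 : ContDiff ℝ (⊤ : ℕ∞) (pdx (pdx p)) := contDiff_pdx hp1
  have hq1 : ContDiff ℝ (⊤ : ℕ∞) (pdx q) := contDiff_pdx hq
  have hq2 : ContDiff ℝ (⊤ : ℕ∞) (pdx (pdx q)) := contDiff_pdx hq1
  -- x-derivative of w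
  have K1 : ∀ z, pdx (fun y => pdx p y * q y - p y * pdx q y + (p y * q y) ^ 2) z
      = pdx (pdx p) z * q z - p z * pdx (pdx q) z
        + 2 * (p z * q z) * (pdx p z * q z + p z * pdx q z) := by
    intro z
    have hsq := ((hasDX hp z).mul (hasDX hq z)).csq
    have h := ((((hasDX hp1 z).mul (hasDX hq z)).sub ((hasDX hp z).mul (hasDX hq1 z))).add
      hsq).deriv
    simp only [Prod.mk.eta, Pi.mul_apply] at h
    exact h.trans (by ring)
  -- y-derivative of w
  have K5 : ∀ z, pdy (fun y => pdx p y * q y - p y * pdx q y + (p y * q y) ^ 2) z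
      = pdy (pdx p) z * q z + pdx p z * pdy q z
        - (pdy p z * pdx q z + p z * pdy (pdx q) z)
        + 2 * (p z * q z) * (pdy p z * q z + p z * pdy q z) := by
    intro z
    have hsq := ((hasDY hp z).mul (hasDY hq z)).csq
    have h := ((((hasDY hp1 z).mul (hasDY hq z)).sub ((hasDY hp z).mul (hasDY hq1 z))).add
      hsq).deriv
    simp only [Prod.mk.eta, Pi.mul_apply] at h
    exact h.trans (by ring)
  -- y- and t-derivatives of v
  have K2 : ∀ z, pdy (fun y => p y * q y) z = pdy p z * q z + p z * pdy q z := fun z =>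
    ((hasDY hp z).mul (hasDY hq z)).deriv
  have K3 : ∀ z, pdt (fun y => p y * q y) z = pdt p z * q z + p z * pdt q z := fun z =>
    ((hasDT hp z).mul (hasDT hq z)).deriv
  -- x-derivatives of v
  have Vx : ∀ z, pdx (fun y => p y * q y) z = pdx p z * q z + p z * pdx q z := fun z =>
    ((hasDX hp z).mul (hasDX hq z)).deriv
  have VxF : pdx (fun y => p y * q y) = fun y => pdx p y * q y + p y * pdx q y := funext Vx
  have Vxx : ∀ z, pdx (fun y => pdx p y * q y + p y * pdx q y) z
      = pdx (pdx p) z * q z + pdx p z * pdx q z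
        + (pdx p z * pdx q z + p z * pdx (pdx q) z) := fun z =>
    (((hasDX hp1 z).mul (hasDX hq z)).add ((hasDX hp z).mul (hasDX hq1 z))).deriv
  have VxxF : pdx (fun y => pdx p y * q y + p y * pdx q y)
      = fun y => pdx (pdx p) y * q y + pdx p y * pdx q y
        + (pdx p y * pdx q y + p y * pdx (pdx q) y) := funext Vxx
  have Vxxx : ∀ z, pdx (fun y => pdx (pdx p) y * q y + pdx p y * pdx q y
        + (pdx p y * pdx q y + p y * pdx (pdx q) y)) z
      = pdx (pdx (pdx p)) z * q z + pdx (pdx p) z * pdx q z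
        + (pdx (pdx p) z * pdx q z + pdx p z * pdx (pdx q) z)
        + (pdx (pdx p) z * pdx q z + pdx p z * pdx (pdx q) z
          + (pdx p z * pdx (pdx q) z + p z * pdx (pdx (pdx q)) z)) := fun z =>
    ((((hasDX hp2 z).mul (hasDX hq z)).add ((hasDX hp1 z).mul (hasDX hq1 z))).add
      (((hasDX hp1 z).mul (hasDX hq1 z)).add ((hasDX hp z).mul (hasDX hq2 z)))).deriv
  -- Clairaut and the x-derivatives of h1/h2 right-hand sides
  have C1 : ∀ z, pdy (pdx p) z = pdx (pdy p) z := fun z => pdy_pdx hp z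
  have C2 : ∀ z, pdy (pdx q) z = pdx (pdy q) z := fun z => pdy_pdx hq z
  have Py : pdy p = fun y => pdx (pdx p) y + 2 * p y * pdx p y * q y := funext h1
  have Qy : pdy q = fun y => -(pdx (pdx q) y) + 2 * p y * q y * pdx q y := funext h2
  have K6 : ∀ z, pdx (fun y => pdx (pdx p) y + 2 * p y * pdx p y * q y) z
      = pdx (pdx (pdx p)) z + 2 * (pdx p z) ^ 2 * q z
        + 2 * p z * pdx (pdx p) z * q z + 2 * p z * pdx p z * pdx q z := by
    intro z
    have h := ((hasDX hp2 z).add ((((hasDX hp z).const_mul 2).mul (hasDX hp1 z)).mul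
      (hasDX hq z))).deriv
    simp only [Prod.mk.eta, Pi.mul_apply] at h
    exact h.trans (by ring)
  have K7 : ∀ z, pdx (fun y => -(pdx (pdx q) y) + 2 * p y * q y * pdx q y) z
      = -(pdx (pdx (pdx q)) z) + 2 * pdx p z * q z * pdx q z
        + 2 * p z * pdx q z * pdx q z + 2 * p z * q z * pdx (pdx q) z := by
    intro z
    have h := ((hasDX hq2 z).neg.add ((((hasDX hp z).const_mul 2).mul (hasDX hq z)).mul
      (hasDX hq1 z))).deriv
    simp only [Prod.mk.eta, Pi.mul_apply] at h
    exact h.trans (by ring)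
  constructor
  · intro z
    rw [K1 z, K2 z, h1 z, h2 z]; ring
  · intro z
    rw [K3 z, h3 z, h4 z, K5 z, Vx z, h1 z, h2 z, C1 z, C2 z, Py, Qy, K6 z, K7 z,
      VxF, VxxF, Vxxx z]
    ring

end
end

section
/- Let N, M ≥ 1, let Ξ, Λ ∈ M_N(ℂ) be constant matrices with no common eigenvalue, and let η: ℝ² → ℂ^{N×M}, θ: ℝ² → ℂ^{M×N}, Ω: ℝ² → M_N(ℂ), A: ℝ² → M_M(ℂ) be differentiable functions of (τ, σ) such that at every point: Ξ·Ω − Ω·Λ = η·θ; ∂_σ η = Ξ·(∂_τ η) + η·A; and ∂_σ θ = (∂_τ θ)·Λ − A·θ. Then Ω satisfies the differential recurrence relations ∂_σ Ω = (∂_τ η)·θ + (∂_τ Ω)·Λ and ∂_σ Ω = Ξ·(∂_τ Ω) − η·(∂_τ θ). -/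
/-!
Differentiating the Sylvester identity `ΞΩ - ΩΛ = ηθ` in `τ` and in `σ` and inserting the evolution
equations of `η` and `θ` (the `A`-terms cancel) shows that `D = ∂_σΩ - (∂_τη)θ - (∂_τΩ)Λ` solves
the homogeneous Sylvester equation `ΞD = DΛ`. Then `χ_Λ(Ξ) D = D χ_Λ(Λ) = 0`, and `χ_Λ(Ξ)` is
invertible because `Ξ` has no eigenvalue in common with `Λ`, so `D = 0`. The second relation is
the first one combined with the `τ`-derivative of the Sylvester identity.
-/

noncomputable section

/-- Entrywise partial derivative in the first coordinate `τ` of `ℝ²`. -/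
def pdτ {a b : Type*} (f : ℝ × ℝ → Matrix a b ℂ) (p : ℝ × ℝ) : Matrix a b ℂ :=
  Matrix.of fun i j => deriv (fun s => f (s, p.2) i j) p.1

/-- Entrywise partial derivative in the second coordinate `σ` of `ℝ²`. -/
def pdσ {a b : Type*} (f : ℝ × ℝ → Matrix a b ℂ) (p : ℝ × ℝ) : Matrix a b ℂ :=
  Matrix.of fun i j => deriv (fun s => f (p.1, s) i j) p.2

namespace Matrix

open Polynomial

section Sylvester

variable {K : Type*} [Field K] {m n : Type*} [Fintype m] [DecidableEq m] [Fintype n]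
  [DecidableEq n]

theorem aeval_mul_eq_mul_aeval_of_mul_eq_mul {X : Matrix m m K} {Y : Matrix n n K}
    {W : Matrix m n K} (h : X * W = W * Y) (p : K[X]) :
    aeval X p * W = W * aeval Y p := by
  induction p using Polynomial.induction_on with
  | C c =>
    simp only [aeval_C, Algebra.algebraMap_eq_smul_one, Matrix.smul_mul, Matrix.mul_smul, Matrix.one_mul,
      Matrix.mul_one]
  | add p q hp hq => rw [map_add, map_add, Matrix.add_mul, Matrix.mul_add, hp, hq]
  | monomial k c hk =>
    rw [pow_succ, ← mul_assoc, map_mul, map_mul (aeval Y), aeval_X, aeval_X, Matrix.mul_assoc, h,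
      ← Matrix.mul_assoc, hk, Matrix.mul_assoc]

theorem isUnit_aeval_charpoly_of_disjoint_spectrum [IsAlgClosed K] {A : Type*} [Ring A]
    [Algebra K A] {a : A} {Y : Matrix n n K} (h : Disjoint (spectrum K a) (spectrum K Y)) :
    IsUnit (aeval a Y.charpoly) := by
  by_contra hu
  rw [(IsAlgClosed.splits Y.charpoly).eq_prod_roots_of_monic Y.charpoly_monic] at hu
  obtain ⟨k, hka, hkY⟩ := spectrum.exists_mem_of_not_isUnit_aeval_prod hu
  exact h.notMem_of_mem_left hka (mem_spectrum_iff_isRoot_charpoly.2 hkY)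

theorem eq_zero_of_mul_eq_mul_of_disjoint_spectrum [IsAlgClosed K] {X : Matrix m m K}
    {Y : Matrix n n K} (hXY : Disjoint (spectrum K X) (spectrum K Y)) {W : Matrix m n K}
    (h : X * W = W * Y) : W = 0 := by
  set P := aeval X Y.charpoly
  have hPW : P * W = 0 := by
    rw [aeval_mul_eq_mul_aeval_of_mul_eq_mul h, aeval_self_charpoly, Matrix.mul_zero]
  have hP : IsUnit P.det :=
    (isUnit_iff_isUnit_det P).1 (isUnit_aeval_charpoly_of_disjoint_spectrum hXY)
  calc W = (P⁻¹ * P) * W := by rw [nonsing_inv_mul P hP, Matrix.one_mul]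
    _ = 0 := by rw [Matrix.mul_assoc, hPW, Matrix.mul_zero]

end Sylvester

section EntrywiseDeriv

variable {𝕜 : Type*} [NontriviallyNormedField 𝕜] {R : Type*} [NormedRing R] [NormedAlgebra 𝕜 R]
  {l m n : Type*} {x : 𝕜}

theorem hasDerivAt_mul_apply [Fintype m] {F : 𝕜 → Matrix l m R} {G : 𝕜 → Matrix m n R}
    {F' : Matrix l m R} {G' : Matrix m n R}
    (hF : ∀ i j, HasDerivAt (fun s => F s i j) (F' i j) x)
    (hG : ∀ i j, HasDerivAt (fun s => G s i j) (G' i j) x) (i : l) (k : n) :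
    HasDerivAt (fun s => (F s * G s) i k) ((F' * G x + F x * G') i k) x := by
  simp only [mul_apply, add_apply, ← Finset.sum_add_distrib]
  exact HasDerivAt.fun_sum fun j _ => (hF i j).fun_mul (hG j k)

theorem sylvester_eq_of_hasDerivAt [Fintype l] [Fintype m] [Fintype n] {X : Matrix m m R}
    {Y : Matrix n n R} {F : 𝕜 → Matrix m n R} {G : 𝕜 → Matrix m l R} {H : 𝕜 → Matrix l n R}
    {F' : Matrix m n R} {G' : Matrix m l R} {H' : Matrix l n R}
    (hF : ∀ i j, HasDerivAt (fun s => F s i j) (F' i j) x)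
    (hG : ∀ i j, HasDerivAt (fun s => G s i j) (G' i j) x)
    (hH : ∀ i j, HasDerivAt (fun s => H s i j) (H' i j) x)
    (hSyl : ∀ s, X * F s - F s * Y = G s * H s) :
    X * F' - F' * Y = G' * H x + G x * H' := by
  ext i j
  have hL := (hasDerivAt_mul_apply (F := fun _ => X) (F' := 0)
    (fun _ _ => hasDerivAt_const x _) hF i j).fun_sub
    (hasDerivAt_mul_apply (G := fun _ => Y) (G' := 0) hF (fun _ _ => hasDerivAt_const x _) i j)
  simp only [← sub_apply, hSyl] at hL
  simpa using hL.unique (hasDerivAt_mul_apply hG hH i j)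

end EntrywiseDeriv

end Matrix

theorem hasDerivAt_pdτ {m n : Type*} {f : ℝ × ℝ → Matrix m n ℂ} {p : ℝ × ℝ}
    (hf : ∀ i j, DifferentiableAt ℝ (fun z => f z i j) p) (i : m) (j : n) :
    HasDerivAt (fun s => f (s, p.2) i j) (pdτ f p i j) p.1 :=
  ((hf i j).fun_comp' (f := fun s => (s, p.2)) p.1 (by fun_prop)).hasDerivAt

theorem hasDerivAt_pdσ {m n : Type*} {f : ℝ × ℝ → Matrix m n ℂ} {p : ℝ × ℝ}
    (hf : ∀ i j, DifferentiableAt ℝ (fun z => f z i j) p) (i : m) (j : n) :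
    HasDerivAt (fun s => f (p.1, s) i j) (pdσ f p i j) p.2 :=
  ((hf i j).fun_comp' (f := fun s => (p.1, s)) p.2 (by fun_prop)).hasDerivAt

theorem cauchy_matrix_recurrence_general (N M : ℕ)
    (Ξ Λ : Matrix (Fin N) (Fin N) ℂ)
    (hΞΛ : spectrum ℂ Ξ ∩ spectrum ℂ Λ = ∅)
    (η : ℝ × ℝ → Matrix (Fin N) (Fin M) ℂ)
    (θ : ℝ × ℝ → Matrix (Fin M) (Fin N) ℂ)
    (Ω : ℝ × ℝ → Matrix (Fin N) (Fin N) ℂ)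
    (A : ℝ × ℝ → Matrix (Fin M) (Fin M) ℂ)
    (hηd : ∀ i j, Differentiable ℝ fun z => η z i j)
    (hθd : ∀ i j, Differentiable ℝ fun z => θ z i j)
    (hΩd : ∀ i j, Differentiable ℝ fun z => Ω z i j)
    (hSyl : ∀ z, Ξ * Ω z - Ω z * Λ = η z * θ z)
    (hη : ∀ z, pdσ η z = Ξ * pdτ η z + η z * A z)
    (hθ : ∀ z, pdσ θ z = pdτ θ z * Λ - A z * θ z) :
    (∀ z, pdσ Ω z = pdτ η z * θ z + pdτ Ω z * Λ) ∧
    (∀ z, pdσ Ω z = Ξ * pdτ Ω z - η z * pdτ θ z) := by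
  have hτ (z : ℝ × ℝ) : Ξ * pdτ Ω z - pdτ Ω z * Λ = pdτ η z * θ z + η z * pdτ θ z :=
    Matrix.sylvester_eq_of_hasDerivAt (x := z.1) (hasDerivAt_pdτ fun i j => hΩd i j z)
      (hasDerivAt_pdτ fun i j => hηd i j z) (hasDerivAt_pdτ fun i j => hθd i j z)
      fun s => hSyl (s, z.2)
  have hσ (z : ℝ × ℝ) : Ξ * pdσ Ω z - pdσ Ω z * Λ = pdσ η z * θ z + η z * pdσ θ z :=
    Matrix.sylvester_eq_of_hasDerivAt (x := z.2) (hasDerivAt_pdσ fun i j => hΩd i j z)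
      (hasDerivAt_pdσ fun i j => hηd i j z) (hasDerivAt_pdσ fun i j => hθd i j z)
      fun s => hSyl (z.1, s)
  have hΩσ (z : ℝ × ℝ) : pdσ Ω z = pdτ η z * θ z + pdτ Ω z * Λ := by
    rw [← sub_eq_zero]
    refine Matrix.eq_zero_of_mul_eq_mul_of_disjoint_spectrum
      (Set.disjoint_iff_inter_eq_empty.2 hΞΛ) ?_
    rw [← sub_eq_zero]
    -- `ΞD - DΛ` in terms of the left-hand sides of the differentiated Sylvester identities
    calc _ = (Ξ * pdσ Ω z - pdσ Ω z * Λ) - Ξ * pdτ η z * θ z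
          - (Ξ * pdτ Ω z - pdτ Ω z * Λ) * Λ + pdτ η z * θ z * Λ := by
          simp only [Matrix.mul_add, Matrix.add_mul, Matrix.mul_sub, Matrix.sub_mul,
            Matrix.mul_assoc]
          abel
      _ = 0 := by
          rw [hσ, hη, hθ, hτ]
          simp only [Matrix.add_mul, Matrix.mul_sub, Matrix.mul_assoc]
          abel
  refine ⟨hΩσ, fun z => ?_⟩
  rw [hΩσ z, sub_eq_iff_eq_add.1 (hτ z)]
  abel

/-- **Differential recurrence relations for the Cauchy matrix `Ω`.**
If `ΞΩ − ΩΛ = ηθ` with `Ξ, Λ` sharing no eigenvalue, and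
`∂_σ η = Ξ(∂_τ η) + ηA`, `∂_σ θ = (∂_τ θ)Λ − Aθ`, then
`∂_σ Ω = (∂_τ η)θ + (∂_τ Ω)Λ` and `∂_σ Ω = Ξ(∂_τ Ω) − η(∂_τ θ)`. -/
theorem cauchy_matrix_recurrence (N M : ℕ) (hN : 1 ≤ N) (hM : 1 ≤ M)
    (Ξ Λ : Matrix (Fin N) (Fin N) ℂ)
    (hΞΛ : spectrum ℂ Ξ ∩ spectrum ℂ Λ = ∅)
    (η : ℝ × ℝ → Matrix (Fin N) (Fin M) ℂ)
    (θ : ℝ × ℝ → Matrix (Fin M) (Fin N) ℂ)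
    (Ω : ℝ × ℝ → Matrix (Fin N) (Fin N) ℂ)
    (A : ℝ × ℝ → Matrix (Fin M) (Fin M) ℂ)
    (hηd : ∀ i j, Differentiable ℝ fun z => η z i j)
    (hθd : ∀ i j, Differentiable ℝ fun z => θ z i j)
    (hΩd : ∀ i j, Differentiable ℝ fun z => Ω z i j)
    (hAd : ∀ i j, Differentiable ℝ fun z => A z i j)
    (hSyl : ∀ z, Ξ * Ω z - Ω z * Λ = η z * θ z)
    (hη : ∀ z, pdσ η z = Ξ * pdτ η z + η z * A z)
    (hθ : ∀ z, pdσ θ z = pdτ θ z * Λ - A z * θ z) :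
    (∀ z, pdσ Ω z = pdτ η z * θ z + pdτ Ω z * Λ) ∧
    (∀ z, pdσ Ω z = Ξ * pdτ Ω z - η z * pdτ θ z) :=
  cauchy_matrix_recurrence_general N M Ξ Λ hΞΛ η θ Ω A hηd hθd hΩd hSyl hη hθ

end
end

section
/- Let N, M ≥ 1, let Ξ, Λ ∈ M_N(ℂ) be constant matrices with no common eigenvalue and Ξ invertible, and let η: ℝ² → ℂ^{N×M}, θ: ℝ² → ℂ^{M×N}, Ω: ℝ² → M_N(ℂ), A: ℝ² → M_M(ℂ) be differentiable functions of (τ, σ) with Ω pointwise invertible, such that at every point: Ξ·Ω − Ω·Λ = η·θ; ∂_σ η = Ξ·(∂_τ η) + η·A; and ∂_σ θ = (∂_τ θ)·Λ − A·θ. Then W := I_M − θ·Ω⁻¹·Ξ⁻¹·η and Z := θ·Ω⁻¹·η satisfy ∂_σ W + (∂_τ Z)·W = W·A − A·W. -/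
/-!
Differentiating the Sylvester equation `ΞΩ - ΩΛ = ηθ` along `τ` and along `σ` and inserting the
dispersion relations for `η` and `θ` shows that `E = ∂σΩ - Ξ ∂τΩ + η ∂τθ` solves `ΞE = EΛ`;
since `Ξ` and `Λ` have no common eigenvalue, `E = 0`. With this evolution law for `Ω` and
`∂(Ω⁻¹) = -Ω⁻¹ (∂Ω) Ω⁻¹`, the claimed identity becomes a noncommutative polynomial identity, which
reduces to `0` once `ηθ` and `(∂τη)θ` are eliminated via the Sylvester equation and its
`τ`-derivative.
-/

noncomputable section

open Matrix

section Sylvester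

variable {n m : Type*} [Fintype n] [DecidableEq n] [Fintype m] [DecidableEq m]

theorem Matrix.aeval_mul_eq_mul_aeval {R : Type*} [CommRing R] {A : Matrix n n R}
    {B : Matrix m m R} {X : Matrix n m R} (h : A * X = X * B) (p : Polynomial R) :
    Polynomial.aeval A p * X = X * Polynomial.aeval B p := by
  induction p using Polynomial.induction_on with
  | C a => simp [Algebra.algebraMap_eq_smul_one]
  | add p q hp hq => simp only [map_add, Matrix.add_mul, Matrix.mul_add, hp, hq]
  | monomial k a ih =>
    rw [pow_succ, ← mul_assoc, map_mul _ _ Polynomial.X, map_mul _ _ Polynomial.X,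
      Polynomial.aeval_X, Polynomial.aeval_X, Matrix.mul_assoc, h, ← Matrix.mul_assoc, ih,
      Matrix.mul_assoc]

variable {K : Type*} [Field K] [IsAlgClosed K]

theorem Matrix.isUnit_aeval_charpoly_of_disjoint_spectrum_s14 [Nonempty m] {A : Matrix n n K}
    {B : Matrix m m K} (hAB : Disjoint (spectrum K A) (spectrum K B)) :
    IsUnit (Polynomial.aeval A B.charpoly) := by
  have hdeg : 0 < B.charpoly.degree := by
    rw [charpoly_degree_eq_dim]
    exact_mod_cast Fintype.card_pos
  rw [← spectrum.zero_notMem_iff K, spectrum.map_polynomial_aeval_of_degree_pos A _ hdeg]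
  rintro ⟨μ, hμA, hμB⟩
  exact hAB.ne_of_mem hμA (mem_spectrum_iff_isRoot_charpoly.mpr hμB) rfl

/-- `χ_B(A) X = X χ_B(B) = 0`, and `χ_B(A)` is invertible by the spectral mapping theorem. -/
theorem Matrix.eq_zero_of_mul_eq_mul_of_disjoint_spectrum_s14 {A : Matrix n n K}
    {B : Matrix m m K} {X : Matrix n m K} (hAB : Disjoint (spectrum K A) (spectrum K B))
    (h : A * X = X * B) : X = 0 := by
  cases isEmpty_or_nonempty m
  · exact Subsingleton.elim _ _
  · have hunit := (isUnit_iff_isUnit_det _).mp (isUnit_aeval_charpoly_of_disjoint_spectrum_s14 hAB)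
    have hzero : Polynomial.aeval A B.charpoly * X = 0 := by
      rw [aeval_mul_eq_mul_aeval h, aeval_self_charpoly, Matrix.mul_zero]
    rw [← nonsing_inv_mul_cancel_left _ X hunit, hzero, Matrix.mul_zero]

end Sylvester

section Algebra

variable {n m : Type*} [Fintype n] [DecidableEq n] [Fintype m]

theorem sigma_deriv_eq_of_sylvester {K : Type*} [Field K] [IsAlgClosed K]
    {Ξ Λ Ωτ Ωσ : Matrix n n K} {η ητ ησ : Matrix n m K} {θ θτ θσ : Matrix m n K}
    {A : Matrix m m K} (hΞΛ : Disjoint (spectrum K Ξ) (spectrum K Λ))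
    (hSylτ : Ξ * Ωτ - Ωτ * Λ = ητ * θ + η * θτ) (hSylσ : Ξ * Ωσ - Ωσ * Λ = ησ * θ + η * θσ)
    (hησ : ησ = Ξ * ητ + η * A) (hθσ : θσ = θτ * Λ - A * θ) :
    Ωσ = Ξ * Ωτ - η * θτ := by
  rw [← sub_eq_zero]
  refine eq_zero_of_mul_eq_mul_of_disjoint_spectrum_s14 hΞΛ ?_
  have hτ := congrArg (Ξ * ·) hSylτ
  subst hησ hθσ
  simp only [Matrix.mul_sub, Matrix.sub_mul, Matrix.mul_add, Matrix.add_mul,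
    Matrix.mul_assoc] at hτ hSylσ ⊢
  linear_combination (norm := abel) hSylσ - hτ

theorem dressing_identity_of_sylvester [DecidableEq m] {R : Type*} [CommRing R]
    {Ξ Λ Ω Ωτ Ωσ : Matrix n n R} {η ητ ησ : Matrix n m R} {θ θτ θσ : Matrix m n R}
    {A : Matrix m m R} (hΞ : IsUnit Ξ) (hΩ : IsUnit Ω)
    (hSyl : Ξ * Ω - Ω * Λ = η * θ) (hSylτ : Ξ * Ωτ - Ωτ * Λ = ητ * θ + η * θτ)
    (hΩσ : Ωσ = Ξ * Ωτ - η * θτ) (hησ : ησ = Ξ * ητ + η * A) (hθσ : θσ = θτ * Λ - A * θ) :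
    -(θσ * Ω⁻¹ * Ξ⁻¹ * η - θ * Ω⁻¹ * Ωσ * Ω⁻¹ * Ξ⁻¹ * η + θ * Ω⁻¹ * Ξ⁻¹ * ησ)
      + (θτ * Ω⁻¹ * η - θ * Ω⁻¹ * Ωτ * Ω⁻¹ * η + θ * Ω⁻¹ * ητ) * (1 - θ * Ω⁻¹ * Ξ⁻¹ * η)
      = (1 - θ * Ω⁻¹ * Ξ⁻¹ * η) * A - A * (1 - θ * Ω⁻¹ * Ξ⁻¹ * η) := by
  rw [isUnit_iff_isUnit_det] at hΞ hΩ
  have hηθ : ∀ X : Matrix n m R, η * (θ * X) = Ξ * (Ω * X) - Ω * (Λ * X) := by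
    intro X
    rw [← Matrix.mul_assoc, ← hSyl, Matrix.sub_mul, Matrix.mul_assoc, Matrix.mul_assoc]
  have hητθ : ∀ X : Matrix n m R,
      ητ * (θ * X) = Ξ * (Ωτ * X) - Ωτ * (Λ * X) - η * (θτ * X) := by
    intro X
    rw [← Matrix.mul_assoc, eq_sub_of_add_eq hSylτ.symm, Matrix.sub_mul, Matrix.sub_mul,
      Matrix.mul_assoc, Matrix.mul_assoc, Matrix.mul_assoc]
  subst hΩσ hησ hθσ
  simp only [Matrix.mul_assoc, Matrix.mul_add, Matrix.add_mul, Matrix.mul_sub, Matrix.sub_mul,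
    Matrix.mul_one, Matrix.one_mul, neg_sub, neg_add, hηθ, hητθ,
    mul_nonsing_inv_cancel_left _ _ hΞ, nonsing_inv_mul_cancel_left _ _ hΞ,
    mul_nonsing_inv_cancel_left _ _ hΩ, nonsing_inv_mul_cancel_left _ _ hΩ]
  abel

end Algebra

section EntrywiseDeriv

variable {𝕜 : Type*} [NontriviallyNormedField 𝕜] {K : Type*} [NormedField K] [NormedAlgebra 𝕜 K]
  {l m n : Type*}

def EntrywiseDifferentiableAt (f : 𝕜 → Matrix m n K) (t : 𝕜) : Prop :=
  ∀ i j, DifferentiableAt 𝕜 (fun s => f s i j) t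

def entrywiseDeriv (f : 𝕜 → Matrix m n K) (t : 𝕜) : Matrix m n K :=
  Matrix.of fun i j => deriv (fun s => f s i j) t

variable {t : 𝕜}

theorem entrywiseDifferentiableAt_const (C : Matrix m n K) :
    EntrywiseDifferentiableAt (fun _ => C) t :=
  fun _ _ => differentiableAt_const _

theorem EntrywiseDifferentiableAt.mul [Fintype m] {f : 𝕜 → Matrix l m K} {g : 𝕜 → Matrix m n K}
    (hf : EntrywiseDifferentiableAt f t) (hg : EntrywiseDifferentiableAt g t) :
    EntrywiseDifferentiableAt (fun s => f s * g s) t := fun i j => by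
  simp only [Matrix.mul_apply]
  exact DifferentiableAt.fun_sum fun k _ => (hf i k).fun_mul (hg k j)

theorem EntrywiseDifferentiableAt.det [Fintype n] [DecidableEq n] {f : 𝕜 → Matrix n n K}
    (hf : EntrywiseDifferentiableAt f t) : DifferentiableAt 𝕜 (fun s => (f s).det) t := by
  simp only [det_apply']
  exact DifferentiableAt.fun_sum fun σ _ =>
    (DifferentiableAt.fun_finsetProd fun i _ => hf (σ i) i).const_mul _

theorem EntrywiseDifferentiableAt.adjugate [Fintype n] [DecidableEq n] {f : 𝕜 → Matrix n n K}
    (hf : EntrywiseDifferentiableAt f t) :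
    EntrywiseDifferentiableAt (fun s => (f s).adjugate) t := fun i j => by
  simp only [adjugate_apply]
  refine EntrywiseDifferentiableAt.det fun k l => ?_
  rcases eq_or_ne k j with rfl | hk
  · simp only [updateRow_self]
    exact differentiableAt_const _
  · simpa only [updateRow_ne hk] using hf k l

theorem EntrywiseDifferentiableAt.inv [Fintype n] [DecidableEq n] {f : 𝕜 → Matrix n n K}
    (hf : EntrywiseDifferentiableAt f t) (hunit : IsUnit (f t)) :
    EntrywiseDifferentiableAt (fun s => (f s)⁻¹) t := fun i j => by
  have hdet : (f t).det ≠ 0 := ((isUnit_iff_isUnit_det _).mp hunit).ne_zero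
  simp only [inv_def, Ring.inverse_eq_inv', Matrix.smul_apply, smul_eq_mul]
  exact (hf.det.inv hdet).mul (hf.adjugate i j)

theorem entrywiseDeriv_const (C : Matrix m n K) : entrywiseDeriv (fun _ => C) t = 0 := by
  ext i j
  simp [entrywiseDeriv]

theorem entrywiseDeriv_sub {f g : 𝕜 → Matrix m n K} (hf : EntrywiseDifferentiableAt f t)
    (hg : EntrywiseDifferentiableAt g t) :
    entrywiseDeriv (fun s => f s - g s) t = entrywiseDeriv f t - entrywiseDeriv g t := by
  ext i j
  exact deriv_sub (hf i j) (hg i j)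

theorem entrywiseDeriv_const_sub (C : Matrix m n K) (f : 𝕜 → Matrix m n K) :
    entrywiseDeriv (fun s => C - f s) t = -entrywiseDeriv f t := by
  ext i j
  exact deriv_const_sub _

theorem entrywiseDeriv_mul [Fintype m] {f : 𝕜 → Matrix l m K} {g : 𝕜 → Matrix m n K}
    (hf : EntrywiseDifferentiableAt f t) (hg : EntrywiseDifferentiableAt g t) :
    entrywiseDeriv (fun s => f s * g s) t
      = entrywiseDeriv f t * g t + f t * entrywiseDeriv g t := by
  ext i j
  simp only [entrywiseDeriv, of_apply, Matrix.add_apply, mul_apply]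
  rw [deriv_fun_sum fun k _ => (hf i k).fun_mul (hg k j), ← Finset.sum_add_distrib]
  exact Finset.sum_congr rfl fun k _ => deriv_fun_mul (hf i k) (hg k j)

theorem entrywiseDeriv_const_mul [Fintype m] (C : Matrix l m K) {f : 𝕜 → Matrix m n K}
    (hf : EntrywiseDifferentiableAt f t) :
    entrywiseDeriv (fun s => C * f s) t = C * entrywiseDeriv f t := by
  rw [entrywiseDeriv_mul (entrywiseDifferentiableAt_const C) hf, entrywiseDeriv_const,
    Matrix.zero_mul, zero_add]

theorem entrywiseDeriv_mul_const [Fintype m] {f : 𝕜 → Matrix l m K} (C : Matrix m n K)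
    (hf : EntrywiseDifferentiableAt f t) :
    entrywiseDeriv (fun s => f s * C) t = entrywiseDeriv f t * C := by
  rw [entrywiseDeriv_mul hf (entrywiseDifferentiableAt_const C), entrywiseDeriv_const,
    Matrix.mul_zero, add_zero]

theorem entrywiseDeriv_inv [Fintype n] [DecidableEq n] {f : 𝕜 → Matrix n n K}
    (hf : EntrywiseDifferentiableAt f t) (hunit : ∀ s, IsUnit (f s)) :
    entrywiseDeriv (fun s => (f s)⁻¹) t = -((f t)⁻¹ * entrywiseDeriv f t * (f t)⁻¹) := by
  have hdet : ∀ s, IsUnit (f s).det := fun s => (isUnit_iff_isUnit_det _).mp (hunit s)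
  have hprod : entrywiseDeriv f t * (f t)⁻¹ + f t * entrywiseDeriv (fun s => (f s)⁻¹) t = 0 := by
    rw [← entrywiseDeriv_mul hf (hf.inv (hunit t)),
      funext fun s => mul_nonsing_inv (f s) (hdet s), entrywiseDeriv_const]
  rw [← nonsing_inv_mul_cancel_left _ (entrywiseDeriv (fun s => (f s)⁻¹) t) (hdet t),
    eq_neg_of_add_eq_zero_right hprod, Matrix.mul_neg, Matrix.mul_assoc]

theorem entrywiseDeriv_mul_inv_mul_const_mul {o : Type*} [Fintype m] [DecidableEq m]
    [Fintype n] {θ : 𝕜 → Matrix l m K} {Ω : 𝕜 → Matrix m m K} {η : 𝕜 → Matrix n o K}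
    (C : Matrix m n K)
    (hθ : EntrywiseDifferentiableAt θ t) (hΩ : EntrywiseDifferentiableAt Ω t)
    (hη : EntrywiseDifferentiableAt η t) (hunit : ∀ s, IsUnit (Ω s)) :
    entrywiseDeriv (fun s => θ s * (Ω s)⁻¹ * C * η s) t
      = entrywiseDeriv θ t * (Ω t)⁻¹ * C * η t
        - θ t * (Ω t)⁻¹ * entrywiseDeriv Ω t * (Ω t)⁻¹ * C * η t
        + θ t * (Ω t)⁻¹ * C * entrywiseDeriv η t := by
  have hθΩ := hθ.mul (hΩ.inv (hunit t))
  rw [entrywiseDeriv_mul (hθΩ.mul (entrywiseDifferentiableAt_const C)) hη,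
    entrywiseDeriv_mul_const C hθΩ, entrywiseDeriv_mul hθ (hΩ.inv (hunit t)),
    entrywiseDeriv_inv hΩ hunit]
  simp only [Matrix.add_mul, Matrix.mul_neg, Matrix.neg_mul, Matrix.mul_assoc]
  abel

theorem entrywiseDeriv_sylvester [Fintype m] [Fintype n] (Ξ Λ : Matrix m m K)
    {Ω : 𝕜 → Matrix m m K} {η : 𝕜 → Matrix m n K} {θ : 𝕜 → Matrix n m K}
    (hΩ : EntrywiseDifferentiableAt Ω t) (hη : EntrywiseDifferentiableAt η t)
    (hθ : EntrywiseDifferentiableAt θ t) (hSyl : ∀ s, Ξ * Ω s - Ω s * Λ = η s * θ s) :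
    Ξ * entrywiseDeriv Ω t - entrywiseDeriv Ω t * Λ
      = entrywiseDeriv η t * θ t + η t * entrywiseDeriv θ t := by
  have h := congrArg (entrywiseDeriv · t) (funext hSyl)
  rwa [entrywiseDeriv_sub ((entrywiseDifferentiableAt_const Ξ).mul hΩ)
    (hΩ.mul (entrywiseDifferentiableAt_const Λ)), entrywiseDeriv_const_mul Ξ hΩ,
    entrywiseDeriv_mul_const Λ hΩ, entrywiseDeriv_mul hη hθ] at h

theorem entrywiseDifferentiableAt_slice_fst {f : 𝕜 × 𝕜 → Matrix m n K}
    (hf : ∀ i j, Differentiable 𝕜 fun z => f z i j) (c : 𝕜) :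
    EntrywiseDifferentiableAt (fun s => f (s, c)) t := fun i j =>
  ((hf i j).comp (differentiable_id.prodMk (differentiable_const c))) t

theorem entrywiseDifferentiableAt_slice_snd {f : 𝕜 × 𝕜 → Matrix m n K}
    (hf : ∀ i j, Differentiable 𝕜 fun z => f z i j) (c : 𝕜) :
    EntrywiseDifferentiableAt (fun s => f (c, s)) t := fun i j =>
  ((hf i j).comp ((differentiable_const c).prodMk differentiable_id)) t

end EntrywiseDeriv

theorem quasideterminant_dressing_identity_general (N M : ℕ)
    (Ξ Λ : Matrix (Fin N) (Fin N) ℂ)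
    (hΞΛ : spectrum ℂ Ξ ∩ spectrum ℂ Λ = ∅)
    (hΞ : IsUnit Ξ)
    (η : ℝ × ℝ → Matrix (Fin N) (Fin M) ℂ)
    (θ : ℝ × ℝ → Matrix (Fin M) (Fin N) ℂ)
    (Ω : ℝ × ℝ → Matrix (Fin N) (Fin N) ℂ)
    (A : ℝ × ℝ → Matrix (Fin M) (Fin M) ℂ)
    (hηd : ∀ i j, Differentiable ℝ fun z => η z i j)
    (hθd : ∀ i j, Differentiable ℝ fun z => θ z i j)
    (hΩd : ∀ i j, Differentiable ℝ fun z => Ω z i j)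
    (hΩinv : ∀ z, IsUnit (Ω z))
    (hSyl : ∀ z, Ξ * Ω z - Ω z * Λ = η z * θ z)
    (hη : ∀ z, pdσ η z = Ξ * pdτ η z + η z * A z)
    (hθ : ∀ z, pdσ θ z = pdτ θ z * Λ - A z * θ z) :
    ∀ z, pdσ (fun y => (1 : Matrix (Fin M) (Fin M) ℂ) - θ y * (Ω y)⁻¹ * Ξ⁻¹ * η y) z
      + pdτ (fun y => θ y * (Ω y)⁻¹ * η y) z
        * ((1 : Matrix (Fin M) (Fin M) ℂ) - θ z * (Ω z)⁻¹ * Ξ⁻¹ * η z)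
      = ((1 : Matrix (Fin M) (Fin M) ℂ) - θ z * (Ω z)⁻¹ * Ξ⁻¹ * η z) * A z
        - A z * ((1 : Matrix (Fin M) (Fin M) ℂ) - θ z * (Ω z)⁻¹ * Ξ⁻¹ * η z) := by
  intro z
  -- `pdτ f z` and `pdσ f z` are `entrywiseDeriv` along the axis-parallel lines through `z`.
  have hSylτ : Ξ * pdτ Ω z - pdτ Ω z * Λ = pdτ η z * θ z + η z * pdτ θ z :=
    entrywiseDeriv_sylvester Ξ Λ (entrywiseDifferentiableAt_slice_fst hΩd z.2)
      (entrywiseDifferentiableAt_slice_fst hηd z.2) (entrywiseDifferentiableAt_slice_fst hθd z.2)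
      fun s => hSyl (s, z.2)
  have hSylσ : Ξ * pdσ Ω z - pdσ Ω z * Λ = pdσ η z * θ z + η z * pdσ θ z :=
    entrywiseDeriv_sylvester Ξ Λ (entrywiseDifferentiableAt_slice_snd hΩd z.1)
      (entrywiseDifferentiableAt_slice_snd hηd z.1) (entrywiseDifferentiableAt_slice_snd hθd z.1)
      fun s => hSyl (z.1, s)
  have hΩσ : pdσ Ω z = Ξ * pdτ Ω z - η z * pdτ θ z :=
    sigma_deriv_eq_of_sylvester (Set.disjoint_iff_inter_eq_empty.mpr hΞΛ) hSylτ hSylσ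
      (hη z) (hθ z)
  have hWσ : pdσ (fun y => (1 : Matrix (Fin M) (Fin M) ℂ) - θ y * (Ω y)⁻¹ * Ξ⁻¹ * η y) z
      = -(pdσ θ z * (Ω z)⁻¹ * Ξ⁻¹ * η z - θ z * (Ω z)⁻¹ * pdσ Ω z * (Ω z)⁻¹ * Ξ⁻¹ * η z
        + θ z * (Ω z)⁻¹ * Ξ⁻¹ * pdσ η z) :=
    (entrywiseDeriv_const_sub _ _).trans <| congrArg Neg.neg <|
      entrywiseDeriv_mul_inv_mul_const_mul Ξ⁻¹ (entrywiseDifferentiableAt_slice_snd hθd z.1)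
        (entrywiseDifferentiableAt_slice_snd hΩd z.1) (entrywiseDifferentiableAt_slice_snd hηd z.1)
        fun s => hΩinv (z.1, s)
  have hZτ : pdτ (fun y => θ y * (Ω y)⁻¹ * η y) z
      = pdτ θ z * (Ω z)⁻¹ * η z - θ z * (Ω z)⁻¹ * pdτ Ω z * (Ω z)⁻¹ * η z
        + θ z * (Ω z)⁻¹ * pdτ η z := by
    have h := entrywiseDeriv_mul_inv_mul_const_mul (t := z.1) 1
      (entrywiseDifferentiableAt_slice_fst hθd z.2) (entrywiseDifferentiableAt_slice_fst hΩd z.2)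
      (entrywiseDifferentiableAt_slice_fst hηd z.2) fun s => hΩinv (s, z.2)
    simp only [Matrix.mul_one] at h
    exact h
  rw [hWσ, hZτ]
  exact dressing_identity_of_sylvester hΞ (hΩinv z) (hSyl z) hSylτ hΩσ (hη z) (hθ z)

/-- **Key identity for the quasi-determinant dressing of the ASDYM hierarchy.**
Under the Cauchy matrix scheme (Sylvester equation `ΞΩ − ΩΛ = ηθ`, dispersion
relations for `η, θ`), the quasi-determinants `W = I − θΩ⁻¹Ξ⁻¹η` and `Z = θΩ⁻¹η`
satisfy `∂_σ W + (∂_τ Z)W = [W, A]`. -/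
theorem quasideterminant_dressing_identity (N M : ℕ) (hN : 1 ≤ N) (hM : 1 ≤ M)
    (Ξ Λ : Matrix (Fin N) (Fin N) ℂ)
    (hΞΛ : spectrum ℂ Ξ ∩ spectrum ℂ Λ = ∅)
    (hΞ : IsUnit Ξ)
    (η : ℝ × ℝ → Matrix (Fin N) (Fin M) ℂ)
    (θ : ℝ × ℝ → Matrix (Fin M) (Fin N) ℂ)
    (Ω : ℝ × ℝ → Matrix (Fin N) (Fin N) ℂ)
    (A : ℝ × ℝ → Matrix (Fin M) (Fin M) ℂ)
    (hηd : ∀ i j, Differentiable ℝ fun z => η z i j)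
    (hθd : ∀ i j, Differentiable ℝ fun z => θ z i j)
    (hΩd : ∀ i j, Differentiable ℝ fun z => Ω z i j)
    (hAd : ∀ i j, Differentiable ℝ fun z => A z i j)
    (hΩinv : ∀ z, IsUnit (Ω z))
    (hSyl : ∀ z, Ξ * Ω z - Ω z * Λ = η z * θ z)
    (hη : ∀ z, pdσ η z = Ξ * pdτ η z + η z * A z)
    (hθ : ∀ z, pdσ θ z = pdτ θ z * Λ - A z * θ z) :
    ∀ z, pdσ (fun y => (1 : Matrix (Fin M) (Fin M) ℂ) - θ y * (Ω y)⁻¹ * Ξ⁻¹ * η y) z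
      + pdτ (fun y => θ y * (Ω y)⁻¹ * η y) z
        * ((1 : Matrix (Fin M) (Fin M) ℂ) - θ z * (Ω z)⁻¹ * Ξ⁻¹ * η z)
      = ((1 : Matrix (Fin M) (Fin M) ℂ) - θ z * (Ω z)⁻¹ * Ξ⁻¹ * η z) * A z
        - A z * ((1 : Matrix (Fin M) (Fin M) ℂ) - θ z * (Ω z)⁻¹ * Ξ⁻¹ * η z) :=
  quasideterminant_dressing_identity_general N M Ξ Λ hΞΛ hΞ η θ Ω A hηd hθd hΩd hΩinv hSyl hη hθ

end
end

section
/- Let N, M ≥ 1, let Ξ, Λ ∈ M_N(ℂ) be constant matrices with no common eigenvalue and Ξ invertible, and let η: ℝ² → ℂ^{N×M}, θ: ℝ² → ℂ^{M×N}, Ω: ℝ² → M_N(ℂ), A: ℝ² → M_M(ℂ), J⁰: ℝ² → M_M(ℂ), K⁰: ℝ² → M_M(ℂ) be differentiable functions of (τ, σ) with Ω and J⁰ pointwise invertible, such that at every point: −(∂_σ J⁰)·(J⁰)⁻¹ = A = ∂_τ K⁰; Ξ·Ω − Ω·Λ = η·θ; ∂_σ η = Ξ·(∂_τ η) + η·A;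 and ∂_σ θ = (∂_τ θ)·Λ − A·θ. Then J := (I_M − θ·Ω⁻¹·Ξ⁻¹·η)·J⁰ and K := θ·Ω⁻¹·η + K⁰ satisfy the ASDYM gauge-potential compatibility relation ∂_σ J = −(∂_τ K)·J. -/
/-!
Differentiating the Sylvester equation `ΞΩ - ΩΛ = ηθ` in `σ` and in `τ` and inserting the flows
of `η` and `θ` shows that `Ω_σ - Ω_τ Λ - η_τ θ` solves the homogeneous Sylvester equation; as `Ξ`
and `Λ` have no common eigenvalue, `Ω_σ = Ω_τ Λ + η_τ θ`. With this and `J⁰_σ = -A J⁰`, both sides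
of `∂_σ J = -(∂_τ K) J` become noncommutative polynomials in the data and their `τ`-derivatives,
which agree once `η θ Ω⁻¹ Ξ⁻¹` is replaced by `1 - Ω Λ Ω⁻¹ Ξ⁻¹`.
-/

noncomputable section

open Polynomial Topology

section Sylvester

variable {K : Type*} [Field K] {n m : Type*} [Fintype n] [DecidableEq n] [Fintype m]

theorem Matrix.aeval_mul_eq_mul_aeval_s15 [DecidableEq m] {Ξ : Matrix n n K} {Λ : Matrix m m K}
    {Y : Matrix n m K} (h : Ξ * Y = Y * Λ) (p : K[X]) : aeval Ξ p * Y = Y * aeval Λ p := by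
  induction p using Polynomial.induction_on' with
  | add p q hp hq => rw [map_add, map_add, Matrix.add_mul, Matrix.mul_add, hp, hq]
  | monomial k a =>
    have hpow : Ξ ^ k * Y = Y * Λ ^ k := by
      induction k with
      | zero => simp
      | succ k ih =>
        rw [pow_succ, pow_succ, Matrix.mul_assoc, h, ← Matrix.mul_assoc, ih, Matrix.mul_assoc]
    simp only [aeval_monomial, Algebra.algebraMap_eq_smul_one, Matrix.smul_mul, Matrix.mul_smul,
      Matrix.one_mul, hpow]

/-- The characteristic polynomial `p` of `Λ` kills `Λ`, while `p(Ξ)` is invertible by the spectral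
mapping theorem; hence `p(Ξ) Y = Y p(Λ) = 0` forces `Y = 0`. -/
theorem Matrix.eq_zero_of_mul_eq_mul_of_disjoint_spectrum_s15 [DecidableEq m] [IsAlgClosed K]
    {Ξ : Matrix n n K} {Λ : Matrix m m K} (hΞΛ : Disjoint (spectrum K Ξ) (spectrum K Λ))
    {Y : Matrix n m K} (h : Ξ * Y = Y * Λ) : Y = 0 := by
  have hunit : IsUnit (aeval Ξ Λ.charpoly) := by
    rcases isEmpty_or_nonempty m with hm | hm
    · simp [Matrix.charpoly_isEmpty]
    have hdeg : 0 < Λ.charpoly.degree := by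
      rw [Matrix.charpoly_degree_eq_dim]
      exact_mod_cast Fintype.card_pos
    rw [← not_not (a := IsUnit _), ← spectrum.zero_mem_iff K,
      spectrum.map_polynomial_aeval_of_degree_pos _ _ hdeg]
    rintro ⟨μ, hμΞ, hμ⟩
    exact hΞΛ.notMem_of_mem_left hμΞ (Matrix.mem_spectrum_iff_isRoot_charpoly.mpr hμ)
  calc Y = (aeval Ξ Λ.charpoly)⁻¹ * (aeval Ξ Λ.charpoly * Y) :=
        (Matrix.nonsing_inv_mul_cancel_left _ _ ((Matrix.isUnit_iff_isUnit_det _).mp hunit)).symm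
    _ = 0 := by
      rw [Matrix.aeval_mul_eq_mul_aeval_s15 h, Matrix.aeval_self_charpoly, Matrix.mul_zero,
        Matrix.mul_zero]

theorem Matrix.sylvester_flow [IsAlgClosed K] {Ξ Λ : Matrix n n K}
    (hΞΛ : Disjoint (spectrum K Ξ) (spectrum K Λ)) {Ωσ Ωτ : Matrix n n K} {η ησ ητ : Matrix n m K}
    {θ θσ θτ : Matrix m n K} {A : Matrix m m K}
    (hσ : Ξ * Ωσ - Ωσ * Λ = ησ * θ + η * θσ) (hτ : Ξ * Ωτ - Ωτ * Λ = ητ * θ + η * θτ)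
    (hη : ησ = Ξ * ητ + η * A) (hθ : θσ = θτ * Λ - A * θ) : Ωσ = Ωτ * Λ + ητ * θ := by
  rw [← sub_eq_zero]
  refine Matrix.eq_zero_of_mul_eq_mul_of_disjoint_spectrum_s15 hΞΛ (sub_eq_zero.mp ?_)
  calc Ξ * (Ωσ - (Ωτ * Λ + ητ * θ)) - (Ωσ - (Ωτ * Λ + ητ * θ)) * Λ
      = (Ξ * Ωσ - Ωσ * Λ) - (Ξ * Ωτ - Ωτ * Λ) * Λ - (Ξ * ητ * θ - ητ * θ * Λ) := by
        simp only [Matrix.mul_add, Matrix.add_mul, Matrix.mul_sub, Matrix.sub_mul, Matrix.mul_assoc]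
        abel
    _ = 0 := by
        rw [hσ, hτ, hη, hθ]
        simp only [Matrix.add_mul, Matrix.mul_sub, Matrix.mul_assoc]
        abel

/-- The two sides are `∂_σ J` and `-(∂_τ K) J` after the `σ`-derivatives of `θ, Ω, η, J⁰` have been
replaced by their flows. -/
theorem Matrix.asdym_gram_identity [DecidableEq m] {l R : Type*} [CommRing R]
    {Ξ Λ Ω Ωτ : Matrix n n R} {η ητ : Matrix n m R} {θ θτ : Matrix m n R} (A : Matrix m m R)
    (J : Matrix m l R) (hΞ : IsUnit Ξ) (hΩ : IsUnit Ω) (hSyl : Ξ * Ω - Ω * Λ = η * θ) :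
    -(((θτ * Λ - A * θ) * Ω⁻¹ + θ * -(Ω⁻¹ * (Ωτ * Λ + ητ * θ) * Ω⁻¹)) * Ξ⁻¹ * η
        + θ * Ω⁻¹ * Ξ⁻¹ * (Ξ * ητ + η * A)) * J + (1 - θ * Ω⁻¹ * Ξ⁻¹ * η) * -(A * J)
      = -((θτ * Ω⁻¹ + θ * -(Ω⁻¹ * Ωτ * Ω⁻¹)) * η + θ * Ω⁻¹ * ητ + A)
        * ((1 - θ * Ω⁻¹ * Ξ⁻¹ * η) * J) := by
  rw [Matrix.isUnit_iff_isUnit_det] at hΞ hΩ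
  have key (W : Matrix n l R) :
      η * (θ * (Ω⁻¹ * (Ξ⁻¹ * W))) = W - Ω * (Λ * (Ω⁻¹ * (Ξ⁻¹ * W))) := by
    rw [← Matrix.mul_assoc η, ← hSyl, Matrix.sub_mul, Matrix.mul_assoc,
      Matrix.mul_nonsing_inv_cancel_left _ _ hΩ, Matrix.mul_nonsing_inv_cancel_left _ _ hΞ,
      Matrix.mul_assoc]
  simp only [Matrix.mul_add, Matrix.add_mul, Matrix.mul_sub, Matrix.sub_mul, Matrix.mul_neg,
    Matrix.neg_mul, Matrix.mul_assoc, Matrix.one_mul, key,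
    Matrix.nonsing_inv_mul_cancel_left _ _ hΩ, Matrix.nonsing_inv_mul_cancel_left _ _ hΞ]
  abel

end Sylvester

section MatrixDeriv

variable {𝕜 : Type*} [NontriviallyNormedField 𝕜] {𝕜' : Type*} [NontriviallyNormedField 𝕜']
  [NormedAlgebra 𝕜 𝕜'] {X : Type*} {l m n : Type*}

theorem Matrix.differentiableAt_det [Fintype n] [DecidableEq n] {F : 𝕜 → Matrix n n 𝕜'} {t : 𝕜}
    (hF : ∀ i j, DifferentiableAt 𝕜 (fun s => F s i j) t) :
    DifferentiableAt 𝕜 (fun s => (F s).det) t := by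
  simp only [Matrix.det_apply']
  exact .fun_sum fun σ _ => (DifferentiableAt.fun_finsetProd fun i _ => hF (σ i) i).const_mul _

theorem Matrix.differentiableAt_adjugate [Fintype n] [DecidableEq n] {F : 𝕜 → Matrix n n 𝕜'}
    {t : 𝕜} (hF : ∀ i j, DifferentiableAt 𝕜 (fun s => F s i j) t) (i j : n) :
    DifferentiableAt 𝕜 (fun s => (F s).adjugate i j) t := by
  simp only [Matrix.adjugate_apply]
  refine Matrix.differentiableAt_det fun k l => ?_
  simp only [Matrix.updateRow_apply]
  split_ifs
  · exact differentiableAt_const _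
  · exact hF k l

/-- Differentiating along a curve lets the `σ`- and `τ`-slices of functions on `ℝ²` share one
calculus. -/
def HasMatrixDerivAlong (f : X → Matrix m n 𝕜') (γ : 𝕜 → X) (f' : Matrix m n 𝕜') (t : 𝕜) :
    Prop :=
  ∀ i j, HasDerivAt (fun s => f (γ s) i j) (f' i j) t

namespace HasMatrixDerivAlong

variable {γ : 𝕜 → X} {t : 𝕜}

theorem unique {f g : X → Matrix m n 𝕜'} {f' g' : Matrix m n 𝕜'}
    (hf : HasMatrixDerivAlong f γ f' t) (hg : HasMatrixDerivAlong g γ g' t)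
    (hfg : ∀ s, f (γ s) = g (γ s)) : f' = g' :=
  Matrix.ext fun i j => (hf i j).unique (by simpa only [hfg] using hg i j)

theorem const (C : Matrix m n 𝕜') (γ : 𝕜 → X) (t : 𝕜) :
    HasMatrixDerivAlong (fun _ => C) γ 0 t :=
  fun i j => hasDerivAt_const t (C i j)

variable {f g : X → Matrix m n 𝕜'} {f' g' : Matrix m n 𝕜'}

theorem add (hf : HasMatrixDerivAlong f γ f' t) (hg : HasMatrixDerivAlong g γ g' t) :
    HasMatrixDerivAlong (fun x => f x + g x) γ (f' + g') t :=
  fun i j => (hf i j).add (hg i j)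

theorem sub (hf : HasMatrixDerivAlong f γ f' t) (hg : HasMatrixDerivAlong g γ g' t) :
    HasMatrixDerivAlong (fun x => f x - g x) γ (f' - g') t :=
  fun i j => (hf i j).sub (hg i j)

theorem const_sub (C : Matrix m n 𝕜') (hf : HasMatrixDerivAlong f γ f' t) :
    HasMatrixDerivAlong (fun x => C - f x) γ (-f') t := by
  simpa using (const C γ t).sub hf

theorem mul [Fintype n] {f : X → Matrix l n 𝕜'} {g : X → Matrix n m 𝕜'} {f' : Matrix l n 𝕜'}
    {g' : Matrix n m 𝕜'} (hf : HasMatrixDerivAlong f γ f' t) (hg : HasMatrixDerivAlong g γ g' t) :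
    HasMatrixDerivAlong (fun x => f x * g x) γ (f' * g (γ t) + f (γ t) * g') t := by
  intro i j
  simp only [Matrix.mul_apply, Matrix.add_apply, ← Finset.sum_add_distrib]
  exact .fun_sum fun k _ => (hf i k).fun_mul (hg k j)

theorem const_mul [Fintype n] (C : Matrix l n 𝕜') {f : X → Matrix n m 𝕜'} {f' : Matrix n m 𝕜'}
    (hf : HasMatrixDerivAlong f γ f' t) : HasMatrixDerivAlong (fun x => C * f x) γ (C * f') t := by
  simpa using (const C γ t).mul hf

theorem mul_const [Fintype n] {f : X → Matrix l n 𝕜'} {f' : Matrix l n 𝕜'}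
    (hf : HasMatrixDerivAlong f γ f' t) (C : Matrix n m 𝕜') :
    HasMatrixDerivAlong (fun x => f x * C) γ (f' * C) t := by
  simpa using hf.mul (const C γ t)

theorem inv [Fintype n] [DecidableEq n] {f : X → Matrix n n 𝕜'} {f' : Matrix n n 𝕜'}
    (hf : HasMatrixDerivAlong f γ f' t) (hu : IsUnit (f (γ t))) :
    HasMatrixDerivAlong (fun x => (f x)⁻¹) γ (-((f (γ t))⁻¹ * f' * (f (γ t))⁻¹)) t := by
  have hfd : ∀ i j, DifferentiableAt 𝕜 (fun s => f (γ s) i j) t :=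
    fun i j => (hf i j).differentiableAt
  have hdet := Matrix.differentiableAt_det hfd
  have hdet₀ : (f (γ t)).det ≠ 0 := ((Matrix.isUnit_iff_isUnit_det _).mp hu).ne_zero
  -- Cramer's rule `A⁻¹ = (det A)⁻¹ • adj A` makes the entries of the inverse differentiable.
  set g' : Matrix n n 𝕜' := Matrix.of fun i j => deriv (fun s => (f (γ s))⁻¹ i j) t
  have hg : HasMatrixDerivAlong (fun x => (f x)⁻¹) γ g' t := by
    intro i j
    refine DifferentiableAt.hasDerivAt ?_
    simp only [Matrix.inv_def, Matrix.smul_apply, Ring.inverse_eq_inv', smul_eq_mul]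
    exact (hdet.inv hdet₀).mul (Matrix.differentiableAt_adjugate hfd i j)
  have hmul_inv : ∀ᶠ s in 𝓝 t, f (γ s) * (f (γ s))⁻¹ = 1 :=
    (hdet.continuousAt.eventually_ne hdet₀).mono fun s hs =>
      Matrix.mul_nonsing_inv _ (isUnit_iff_ne_zero.mpr hs)
  have hsum : f' * (f (γ t))⁻¹ + f (γ t) * g' = 0 := Matrix.ext fun i j =>
    ((hf.mul hg) i j).unique <| (hasDerivAt_const t ((1 : Matrix n n 𝕜') i j)).congr_of_eventuallyEq
      (hmul_inv.mono fun s hs => congrFun (congrFun hs i) j)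
  have hg' : g' = -((f (γ t))⁻¹ * f' * (f (γ t))⁻¹) := by
    rw [← Matrix.nonsing_inv_mul_cancel_left _ g' ((Matrix.isUnit_iff_isUnit_det _).mp hu),
      eq_neg_of_add_eq_zero_right hsum, Matrix.mul_neg, Matrix.mul_assoc]
  exact hg' ▸ hg

theorem sylvester [Fintype n] [DecidableEq n] [Fintype m] {Ξ Λ : Matrix n n 𝕜'}
    {Ω : X → Matrix n n 𝕜'} {η : X → Matrix n m 𝕜'} {θ : X → Matrix m n 𝕜'} {Ω' : Matrix n n 𝕜'}
    {η' : Matrix n m 𝕜'} {θ' : Matrix m n 𝕜'} (hSyl : ∀ x, Ξ * Ω x - Ω x * Λ = η x * θ x)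
    (hΩ : HasMatrixDerivAlong Ω γ Ω' t) (hη : HasMatrixDerivAlong η γ η' t)
    (hθ : HasMatrixDerivAlong θ γ θ' t) :
    Ξ * Ω' - Ω' * Λ = η' * θ (γ t) + η (γ t) * θ' :=
  ((hΩ.const_mul Ξ).sub (hΩ.mul_const Λ)).unique (hη.mul hθ) fun s => hSyl (γ s)

end HasMatrixDerivAlong

end MatrixDeriv

section Partial

variable {m n : Type*}

theorem hasMatrixDerivAlong_pdσ {f : ℝ × ℝ → Matrix m n ℂ} {a b : ℝ}
    (hf : ∀ i j, DifferentiableAt ℝ (fun y => f y i j) (a, b)) :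
    HasMatrixDerivAlong f (fun s => (a, s)) (pdσ f (a, b)) b := fun i j =>
  (DifferentiableAt.comp (g := fun y => f y i j) b (hf i j)
    ((differentiableAt_const a).prodMk differentiableAt_id)).hasDerivAt

theorem hasMatrixDerivAlong_pdτ {f : ℝ × ℝ → Matrix m n ℂ} {a b : ℝ}
    (hf : ∀ i j, DifferentiableAt ℝ (fun y => f y i j) (a, b)) :
    HasMatrixDerivAlong f (fun s => (s, b)) (pdτ f (a, b)) a := fun i j =>
  (DifferentiableAt.comp (g := fun y => f y i j) a (hf i j)
    (differentiableAt_id.prodMk (differentiableAt_const b))).hasDerivAt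

theorem HasMatrixDerivAlong.pdσ_eq {f : ℝ × ℝ → Matrix m n ℂ} {f' : Matrix m n ℂ} {a b : ℝ}
    (h : HasMatrixDerivAlong f (fun s => (a, s)) f' b) : pdσ f (a, b) = f' :=
  Matrix.ext fun i j => (h i j).deriv

theorem HasMatrixDerivAlong.pdτ_eq {f : ℝ × ℝ → Matrix m n ℂ} {f' : Matrix m n ℂ} {a b : ℝ}
    (h : HasMatrixDerivAlong f (fun s => (s, b)) f' a) : pdτ f (a, b) = f' :=
  Matrix.ext fun i j => (h i j).deriv

end Partial

theorem asdym_gram_solutions_general (N M : ℕ)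
    (Ξ Λ : Matrix (Fin N) (Fin N) ℂ)
    (hΞΛ : spectrum ℂ Ξ ∩ spectrum ℂ Λ = ∅)
    (hΞ : IsUnit Ξ)
    (η : ℝ × ℝ → Matrix (Fin N) (Fin M) ℂ)
    (θ : ℝ × ℝ → Matrix (Fin M) (Fin N) ℂ)
    (Ω : ℝ × ℝ → Matrix (Fin N) (Fin N) ℂ)
    (A J₀ K₀ : ℝ × ℝ → Matrix (Fin M) (Fin M) ℂ)
    (hηd : ∀ i j, Differentiable ℝ fun z => η z i j)
    (hθd : ∀ i j, Differentiable ℝ fun z => θ z i j)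
    (hΩd : ∀ i j, Differentiable ℝ fun z => Ω z i j)
    (hJ₀d : ∀ i j, Differentiable ℝ fun z => J₀ z i j)
    (hK₀d : ∀ i j, Differentiable ℝ fun z => K₀ z i j)
    (hΩinv : ∀ z, IsUnit (Ω z))
    (hJ₀inv : ∀ z, IsUnit (J₀ z))
    (hseed1 : ∀ z, -(pdσ J₀ z) * (J₀ z)⁻¹ = A z)
    (hseed2 : ∀ z, A z = pdτ K₀ z)
    (hSyl : ∀ z, Ξ * Ω z - Ω z * Λ = η z * θ z)
    (hη : ∀ z, pdσ η z = Ξ * pdτ η z + η z * A z)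
    (hθ : ∀ z, pdσ θ z = pdτ θ z * Λ - A z * θ z) :
    ∀ z, pdσ (fun y =>
        ((1 : Matrix (Fin M) (Fin M) ℂ) - θ y * (Ω y)⁻¹ * Ξ⁻¹ * η y) * J₀ y) z
      = -(pdτ (fun y => θ y * (Ω y)⁻¹ * η y + K₀ y) z)
        * (((1 : Matrix (Fin M) (Fin M) ℂ) - θ z * (Ω z)⁻¹ * Ξ⁻¹ * η z) * J₀ z) := by
  rintro ⟨a, b⟩
  have ησ := hasMatrixDerivAlong_pdσ fun i j => (hηd i j).differentiableAt (x := (a, b))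
  have θσ := hasMatrixDerivAlong_pdσ fun i j => (hθd i j).differentiableAt (x := (a, b))
  have Ωσ := hasMatrixDerivAlong_pdσ fun i j => (hΩd i j).differentiableAt (x := (a, b))
  have J₀σ := hasMatrixDerivAlong_pdσ fun i j => (hJ₀d i j).differentiableAt (x := (a, b))
  have ητ := hasMatrixDerivAlong_pdτ fun i j => (hηd i j).differentiableAt (x := (a, b))
  have θτ := hasMatrixDerivAlong_pdτ fun i j => (hθd i j).differentiableAt (x := (a, b))
  have Ωτ := hasMatrixDerivAlong_pdτ fun i j => (hΩd i j).differentiableAt (x := (a, b))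
  have K₀τ := hasMatrixDerivAlong_pdτ fun i j => (hK₀d i j).differentiableAt (x := (a, b))
  have hJ₀ : pdσ J₀ (a, b) = -(A (a, b) * J₀ (a, b)) := by
    rw [← hseed1, Matrix.nonsing_inv_mul_cancel_right _ _
      ((Matrix.isUnit_iff_isUnit_det _).mp (hJ₀inv _)), neg_neg]
  have hSylσ := Ωσ.sylvester hSyl ησ θσ
  have hSylτ := Ωτ.sylvester hSyl ητ θτ
  have hΩ : pdσ Ω (a, b) = pdτ Ω (a, b) * Λ + pdτ η (a, b) * θ (a, b) :=
    Matrix.sylvester_flow (Set.disjoint_iff_inter_eq_empty.mpr hΞΛ) hSylσ hSylτ (hη _) (hθ _)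
  rw [(((((θσ.mul (Ωσ.inv (hΩinv _))).mul_const Ξ⁻¹).mul ησ).const_sub 1).mul J₀σ).pdσ_eq,
    (((θτ.mul (Ωτ.inv (hΩinv _))).mul ητ).add K₀τ).pdτ_eq, hη, hθ, hΩ, hJ₀, ← hseed2]
  exact Matrix.asdym_gram_identity _ _ hΞ (hΩinv _) (hSyl _)

/-- **Gram-type (quasi-determinant) solutions of the ASDYM hierarchy.**
If `J⁰, K⁰` is a seed solution with common gauge potential
`A = −(∂_σ J⁰)(J⁰)⁻¹ = ∂_τ K⁰`, and `η, θ, Ω` satisfy the Cauchy matrix scheme, then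
`J = (I − θΩ⁻¹Ξ⁻¹η)·J⁰` and `K = θΩ⁻¹η + K⁰` satisfy `∂_σ J = −(∂_τ K)·J`. -/
theorem asdym_gram_solutions (N M : ℕ) (hN : 1 ≤ N) (hM : 1 ≤ M)
    (Ξ Λ : Matrix (Fin N) (Fin N) ℂ)
    (hΞΛ : spectrum ℂ Ξ ∩ spectrum ℂ Λ = ∅)
    (hΞ : IsUnit Ξ)
    (η : ℝ × ℝ → Matrix (Fin N) (Fin M) ℂ)
    (θ : ℝ × ℝ → Matrix (Fin M) (Fin N) ℂ)
    (Ω : ℝ × ℝ → Matrix (Fin N) (Fin N) ℂ)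
    (A J₀ K₀ : ℝ × ℝ → Matrix (Fin M) (Fin M) ℂ)
    (hηd : ∀ i j, Differentiable ℝ fun z => η z i j)
    (hθd : ∀ i j, Differentiable ℝ fun z => θ z i j)
    (hΩd : ∀ i j, Differentiable ℝ fun z => Ω z i j)
    (hAd : ∀ i j, Differentiable ℝ fun z => A z i j)
    (hJ₀d : ∀ i j, Differentiable ℝ fun z => J₀ z i j)
    (hK₀d : ∀ i j, Differentiable ℝ fun z => K₀ z i j)
    (hΩinv : ∀ z, IsUnit (Ω z))
    (hJ₀inv : ∀ z, IsUnit (J₀ z))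
    (hseed1 : ∀ z, -(pdσ J₀ z) * (J₀ z)⁻¹ = A z)
    (hseed2 : ∀ z, A z = pdτ K₀ z)
    (hSyl : ∀ z, Ξ * Ω z - Ω z * Λ = η z * θ z)
    (hη : ∀ z, pdσ η z = Ξ * pdτ η z + η z * A z)
    (hθ : ∀ z, pdσ θ z = pdτ θ z * Λ - A z * θ z) :
    ∀ z, pdσ (fun y =>
        ((1 : Matrix (Fin M) (Fin M) ℂ) - θ y * (Ω y)⁻¹ * Ξ⁻¹ * η y) * J₀ y) z
      = -(pdτ (fun y => θ y * (Ω y)⁻¹ * η y + K₀ y) z)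
        * (((1 : Matrix (Fin M) (Fin M) ℂ) - θ z * (Ω z)⁻¹ * Ξ⁻¹ * η z) * J₀ z) :=
  asdym_gram_solutions_general N M Ξ Λ hΞΛ hΞ η θ Ω A J₀ K₀ hηd hθd hΩd hJ₀d hK₀d hΩinv hJ₀inv
    hseed1 hseed2 hSyl hη hθ
end
end
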